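/- Fix k ≥ 1 with k ≤ |V|. Let S^(0) = ∅ and, for i = 1, …, k, let S^(i) = S^(i−1) ∪ {v^(i)} where v^(i) is any node of V \ S^(i−1) maximizing f^corr(S^(i−1) ∪ {v}) over v ∈ V \ S^(i−1). Then the greedy output S^g_corr := S^(k) satisfies f^corr(S^g_corr) ≥ (1 − 1/e) · max_{S ⊆ V, |S| ≤ k} f^corr(S). -/

import Mathlib

open scoped BigOperators

namespace CorrIM

variable {V : Type*} [Fintype V] [DecidableEq V]

/-- A node `i` is influenced: `i ∈ S`, or `i` is reachable from some node of `S`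
along the live edges of the scenario `c`. -/
def influenced (c : Finset (V × V)) (S : Finset V) (i : V) : Prop :=
  ∃ s ∈ S, Relation.ReflTransGen (fun a b : V => (a, b) ∈ c) s i

/-- `R c S` : the number of influenced nodes in scenario `c` with seed set `S`. -/
noncomputable def R (c : Finset (V × V)) (S : Finset V) : ℕ :=
  Set.ncard {i : V | influenced c S i}

/-- The Fréchet class `Θ` : probability distributions on scenarios (subsets of `E`)
whose marginals agree with the edge likelihoods `p`. -/
def memTheta (E : Finset (V × V)) (p : V × V → ℝ) (θ : Finset (V × V) → ℝ) : Prop :=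
  (∀ c, 0 ≤ θ c) ∧ (∀ c, θ c ≠ 0 → c ⊆ E) ∧ (∑ c : Finset (V × V), θ c) = 1 ∧
    ∀ e ∈ E, (∑ c : Finset (V × V), if e ∈ c then θ c else 0) = p e

/-- Expected number of influenced nodes under the distribution `θ`. -/
noncomputable def expInf (θ : Finset (V × V) → ℝ) (S : Finset V) : ℝ :=
  ∑ c : Finset (V × V), θ c * (R c S : ℝ)

/-- The correlation robust influence function `f^corr`. -/
noncomputable def fcorr (E : Finset (V × V)) (p : V × V → ℝ) (S : Finset V) : ℝ :=
  sInf {x : ℝ | ∃ θ, memTheta E p θ ∧ x = expInf θ S}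

open Classical in
/-- Probability of the event `A` under the distribution `θ`. -/
noncomputable def prob (θ : Finset (V × V) → ℝ) (A : Finset (V × V) → Prop) : ℝ :=
  ∑ c : Finset (V × V), if A c then θ c else 0

/-- `γ` (a list of nodes `i₀, i₁, …, i_λ`, `λ ≥ 1`) is a directed path from the
seed set `S` to the node `i` using edges of `E`. -/
def IsPathFrom (E : Finset (V × V)) (S : Finset V) (i : V) (γ : List V) : Prop :=
  2 ≤ γ.length ∧ (∃ s ∈ S, γ.head? = some s) ∧ γ.getLast? = some i ∧
    γ.Chain' (fun a b : V => (a, b) ∈ E)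

/-- The list of edges `(i₀,i₁), …, (i_{λ-1}, i_λ)` of a path `γ = [i₀, …, i_λ]`. -/
def pathEdges (γ : List V) : List (V × V) := γ.zip γ.tail

/-- The weight `L(γ) = 1 - ∑_{l=1}^{λ} (1 - p(i_{l-1}, i_l))` of a path. -/
noncomputable def L (p : V × V → ℝ) (γ : List V) : ℝ :=
  1 - ((pathEdges γ).map (fun e => 1 - p e)).sum

/-- `π*_i = max(0, max_{γ ∈ Γ(S,i)} L(γ))`, with value `0` when `Γ(S,i) = ∅`. -/
noncomputable def piStar (E : Finset (V × V)) (p : V × V → ℝ) (S : Finset V) (i : V) : ℝ :=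
  sSup (insert 0 {x : ℝ | ∃ γ : List V, IsPathFrom E S i γ ∧ x = L p γ})

/-- The independent cascade distribution `θ_ic` : each edge of `E` is live
independently with probability `p e`. -/
noncomputable def thetaIC (E : Finset (V × V)) (p : V × V → ℝ) (c : Finset (V × V)) : ℝ :=
  if c ⊆ E then (∏ e ∈ c, p e) * ∏ e ∈ E \ c, (1 - p e) else 0

/-- The independent cascade influence function `f^ic`. -/
noncomputable def fic (E : Finset (V × V)) (p : V × V → ℝ) (S : Finset V) : ℝ :=
  expInf (thetaIC E p) S

/-!
Let `d(S, i)` be the length of a shortest path from `S` to `i` for the edge lengths `1 - p e`,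
truncated at `1`. Under any `θ ∈ Θ`, a union bound over the edges of a shortest path shows that
`i` is influenced with probability at least `1 - d(S, i)`. Conversely, drive every edge by a
single uniform time `u ∈ [0, 1)`, edge `(a, b)` being dead exactly on an interval of length
`1 - p (a, b)` placed where `a` becomes influenced; then `i` is influenced exactly when
`d(S, i) ≤ u`, so this coupling attains all the bounds at once and
`f^corr(S) = ∑ᵢ (1 - d(S, i))`.

Each summand `1 - d(S, i)` is the best value `1 - d({s}, i)` over seeds `s ∈ S`, so `f^corr` is
monotone and bounded by its marginal gains, `f(T) ≤ f(S) + ∑_{v ∈ T \ S} (f(S ∪ {v}) - f(S))`.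
Hence each greedy step closes a `1/k` fraction of the gap to any `S` with `|S| ≤ k`, and
`(1 - 1/k)^k ≤ 1/e`.
-/

section Greedy

variable {α : Type*} [DecidableEq α]

-- Every monotone submodular set function satisfies this; it is all the greedy analysis needs.
def BoundedByGains (g : Finset α → ℝ) : Prop :=
  ∀ S T : Finset α, g T ≤ g S + ∑ v ∈ T \ S, (g (insert v S) - g S)

theorem BoundedByGains.sum {ι : Type*} (s : Finset ι) {g : ι → Finset α → ℝ}
    (hg : ∀ i ∈ s, BoundedByGains (g i)) : BoundedByGains fun S => ∑ i ∈ s, g i S := by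
  intro S T
  calc ∑ i ∈ s, g i T ≤ ∑ i ∈ s, (g i S + ∑ v ∈ T \ S, (g i (insert v S) - g i S)) :=
        Finset.sum_le_sum fun i hi => hg i hi S T
    _ = _ := by
        rw [Finset.sum_add_distrib, Finset.sum_comm]
        simp only [Finset.sum_sub_distrib]

theorem boundedByGains_of_exists_insert {g : Finset α → ℝ} (hmono : Monotone g)
    (h : ∀ S T, g T ≤ g S ∨ ∃ t ∈ T, g T ≤ g (insert t S)) : BoundedByGains g := by
  intro S T
  have hgain : ∀ v ∈ T \ S, 0 ≤ g (insert v S) - g S := fun v _ =>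
    sub_nonneg.2 (hmono (Finset.subset_insert v S))
  rcases h S T with hle | ⟨t, htT, hle⟩
  · linarith [Finset.sum_nonneg hgain]
  · by_cases htS : t ∈ S
    · rw [Finset.insert_eq_of_mem htS] at hle
      linarith [Finset.sum_nonneg hgain]
    · linarith [Finset.single_le_sum hgain (Finset.mem_sdiff.2 ⟨htT, htS⟩)]

variable {g : Finset α → ℝ} {k : ℕ}

theorem greedy_gap_succ_le (hmono : Monotone g) (hg : BoundedByGains g)
    (hk : 0 < k) {S A : Finset α} (hS : S.card ≤ k) {v : α}
    (hv : ∀ w ∉ A, g (insert w A) ≤ g (insert v A)) :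
    g S - g (insert v A) ≤ (1 - 1 / k) * (g S - g A) := by
  have hgain : 0 ≤ g (insert v A) - g A := sub_nonneg.2 (hmono (Finset.subset_insert v A))
  have hcard : ((S \ A).card : ℝ) ≤ k := by
    exact_mod_cast (Finset.card_le_card Finset.sdiff_subset).trans hS
  have hkey : g S - g A ≤ k * (g (insert v A) - g A) :=
    calc g S - g A ≤ ∑ w ∈ S \ A, (g (insert w A) - g A) := by linarith [hg A S]
      _ ≤ ∑ _w ∈ S \ A, (g (insert v A) - g A) :=
          Finset.sum_le_sum fun w hw => by linarith [hv w (Finset.mem_sdiff.1 hw).2]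
      _ = (S \ A).card * (g (insert v A) - g A) := by rw [Finset.sum_const, nsmul_eq_mul]
      _ ≤ k * (g (insert v A) - g A) := mul_le_mul_of_nonneg_right hcard hgain
  have hdiv : (g S - g A) / k ≤ g (insert v A) - g A := by
    rw [div_le_iff₀ (by exact_mod_cast hk)]
    linarith
  calc g S - g (insert v A) ≤ (g S - g A) - (g S - g A) / k := by linarith
    _ = (1 - 1 / k) * (g S - g A) := by ring

def IsGreedy (g : Finset α → ℝ) (k : ℕ) (Sg : ℕ → Finset α) : Prop :=
  ∀ i < k, ∃ v, Sg (i + 1) = insert v (Sg i) ∧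
    ∀ w ∉ Sg i, g (insert w (Sg i)) ≤ g (insert v (Sg i))

variable {Sg : ℕ → Finset α}

theorem greedy_gap_le (hmono : Monotone g) (hg : BoundedByGains g) (hk : 0 < k)
    {S : Finset α} (hS : S.card ≤ k)
    (hSg : IsGreedy g k Sg) : ∀ j ≤ k, g S - g (Sg j) ≤ (1 - 1 / k) ^ j * (g S - g (Sg 0))
  | 0, _ => by simp
  | j + 1, hj => by
    obtain ⟨v, hins, hv⟩ := hSg j hj
    have hfactor : 0 ≤ 1 - 1 / (k : ℝ) :=
      sub_nonneg.2 (div_le_one_of_le₀ (by exact_mod_cast hk) (Nat.cast_nonneg k))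
    calc g S - g (Sg (j + 1)) ≤ (1 - 1 / k) * (g S - g (Sg j)) :=
          hins ▸ greedy_gap_succ_le hmono hg hk hS hv
      _ ≤ (1 - 1 / k) * ((1 - 1 / k) ^ j * (g S - g (Sg 0))) :=
          mul_le_mul_of_nonneg_left (greedy_gap_le hmono hg hk hS hSg j (by omega)) hfactor
      _ = (1 - 1 / k) ^ (j + 1) * (g S - g (Sg 0)) := by ring

theorem greedy_approx (hmono : Monotone g) (hg0 : 0 ≤ g ∅) (hg : BoundedByGains g)
    (hk : 0 < k) (hSg : IsGreedy g k Sg) {S : Finset α} (hS : S.card ≤ k) :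
    (1 - 1 / Real.exp 1) * g S ≤ g (Sg k) := by
  have hnonneg : ∀ T, 0 ≤ g T := fun T => hg0.trans (hmono (Finset.empty_subset T))
  have hfactor : 0 ≤ (1 - 1 / (k : ℝ)) ^ k :=
    pow_nonneg (sub_nonneg.2 (div_le_one_of_le₀ (by exact_mod_cast hk) (Nat.cast_nonneg k))) k
  have hexp : (1 - 1 / (k : ℝ)) ^ k ≤ 1 / Real.exp 1 := by
    simpa [Real.exp_neg] using Real.one_sub_div_pow_le_exp_neg (n := k) (t := 1)
      (by exact_mod_cast hk)
  have := calc g S - g (Sg k) ≤ (1 - 1 / k) ^ k * (g S - g (Sg 0)) :=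
        greedy_gap_le hmono hg hk hS hSg k le_rfl
    _ ≤ (1 - 1 / k) ^ k * g S :=
        mul_le_mul_of_nonneg_left (by linarith [hnonneg (Sg 0)]) hfactor
    _ ≤ 1 / Real.exp 1 * g S := mul_le_mul_of_nonneg_right hexp (hnonneg S)
  linarith

end Greedy

section Paths

variable {α : Type*}

theorem pathEdges_cons_cons (a b : α) (t : List α) :
    pathEdges (a :: b :: t) = (a, b) :: pathEdges (b :: t) := rfl

theorem isChain_iff_forall_mem_pathEdges {r : α → α → Prop} {γ : List α} :
    γ.IsChain r ↔ ∀ e ∈ pathEdges γ, r e.1 e.2 := by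
  induction γ using List.twoStepInduction with
  | nil => simp [pathEdges]
  | singleton => simp [pathEdges]
  | cons_cons a b t _ ih => simp [pathEdges_cons_cons, ih b]

-- `L p γ = 1 - pathWeight p γ`: with edge lengths `1 - p e`, maximising `L` becomes a
-- shortest-path problem.
def pathWeight (p : α × α → ℝ) (γ : List α) : ℝ :=
  ((pathEdges γ).map fun e => 1 - p e).sum

variable {E : Finset (α × α)} {p : α × α → ℝ}

theorem pathWeight_cons_cons (a b : α) (t : List α) :
    pathWeight p (a :: b :: t) = (1 - p (a, b)) + pathWeight p (b :: t) := by
  simp [pathWeight, pathEdges_cons_cons]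

theorem pathWeight_nonneg (hp : ∀ e ∈ E, p e ≤ 1) {γ : List α}
    (hγ : γ.IsChain fun a b => (a, b) ∈ E) : 0 ≤ pathWeight p γ :=
  List.sum_nonneg fun x hx => by
    obtain ⟨e, he, rfl⟩ := List.mem_map.1 hx
    linarith [hp e (isChain_iff_forall_mem_pathEdges.1 hγ e he)]

theorem pathEdges_take_sublist :
    ∀ (γ : List α) (n : ℕ), (pathEdges (γ.take n)).Sublist (pathEdges γ)
  | [], _ | _ :: _, 0 | [_], _ + 1 | _ :: _ :: _, 1 => by simp [pathEdges]
  | a :: b :: t, n + 2 => by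
    simpa [pathEdges] using (pathEdges_take_sublist (b :: t) (n + 1)).cons_cons (a, b)

theorem pathWeight_take_le (hp : ∀ e ∈ E, p e ≤ 1) {γ : List α}
    (hγ : γ.IsChain fun a b => (a, b) ∈ E) (n : ℕ) :
    pathWeight p (γ.take n) ≤ pathWeight p γ :=
  ((pathEdges_take_sublist γ n).map _).sum_le_sum fun x hx => by
    obtain ⟨e, he, rfl⟩ := List.mem_map.1 hx
    linarith [hp e (isChain_iff_forall_mem_pathEdges.1 hγ e he)]

theorem pathWeight_concat {γ : List α} {a : α} (h : γ.getLast? = some a) (b : α) :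
    pathWeight p (γ ++ [b]) = pathWeight p γ + (1 - p (a, b)) := by
  induction γ using List.twoStepInduction with
  | nil => simp at h
  | singleton x => simp_all [pathWeight, pathEdges]
  | cons_cons x y t _ ih =>
    rw [List.getLast?_cons_cons] at h
    rw [List.cons_append, List.cons_append, pathWeight_cons_cons, ← List.cons_append, ih y h,
      pathWeight_cons_cons]
    ring

theorem reflTransGen_of_isChain {r : α → α → Prop} {γ : List α} {a b : α} (hγ : γ.IsChain r)
    (ha : γ.head? = some a) (hb : γ.getLast? = some b) : Relation.ReflTransGen r a b := by
  have hne : γ ≠ [] := by rintro rfl; simp at ha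
  rw [List.head?_eq_some_head hne, Option.some.injEq] at ha
  rw [List.getLast?_eq_some_getLast hne, Option.some.injEq] at hb
  exact ha ▸ hb ▸ List.relationReflTransGen_of_exists_isChain γ hγ hne

structure IsSimplePath (E : Finset (α × α)) (S : Finset α) (i : α) (γ : List α) : Prop where
  head_mem : ∃ s ∈ S, γ.head? = some s
  getLast?_eq : γ.getLast? = some i
  isChain : γ.IsChain fun a b => (a, b) ∈ E
  nodup : γ.Nodup

variable {S T : Finset α} {i : α} {γ : List α}

theorem IsSimplePath.mono (hγ : IsSimplePath E S i γ) (hST : S ⊆ T) : IsSimplePath E T i γ :=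
  let ⟨s, hs, hhead⟩ := hγ.head_mem
  ⟨⟨s, hST hs, hhead⟩, hγ.getLast?_eq, hγ.isChain, hγ.nodup⟩

theorem IsSimplePath.exists_take {a b : α} (hγ : IsSimplePath E S a γ) (hb : b ∈ γ) :
    ∃ n, IsSimplePath E S b (γ.take n) := by
  obtain ⟨j, hj, rfl⟩ := List.getElem_of_mem hb
  obtain ⟨s, hs, hhead⟩ := hγ.head_mem
  refine ⟨j + 1, ⟨s, hs, ?_⟩, ?_, hγ.isChain.prefix (List.take_prefix _ _),
    (List.take_sublist _ _).nodup hγ.nodup⟩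
  · rwa [List.head?_take, if_neg (Nat.succ_ne_zero j)]
  · rw [List.getLast?_take, if_neg (Nat.succ_ne_zero j), Nat.add_sub_cancel,
      List.getElem?_eq_getElem hj, Option.some_or]

theorem IsSimplePath.concat {a b : α} (hγ : IsSimplePath E S a γ) (he : (a, b) ∈ E)
    (hb : b ∉ γ) : IsSimplePath E S b (γ ++ [b]) := by
  obtain ⟨s, hs, hhead⟩ := hγ.head_mem
  refine ⟨⟨s, hs, by rw [List.head?_append, hhead]; rfl⟩, List.getLast?_concat, ?_, ?_⟩
  · refine List.isChain_append.2 ⟨hγ.isChain, List.isChain_singleton b, ?_⟩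
    simp [hγ.getLast?_eq, he]
  · exact List.nodup_append.2 ⟨hγ.nodup, List.nodup_singleton b, fun x hx y hy => by
    rw [List.mem_singleton.1 hy]; rintro rfl; exact hb hx⟩

end Paths

section Distance

variable {α : Type*} [Fintype α] (E : Finset (α × α)) (p : α × α → ℝ)

-- `1 - truncDist E p S i` is the worst-case probability that `i` is influenced.
noncomputable def truncDist (S : Finset α) (i : α) : ℝ :=
  sInf (insert 1 (pathWeight p '' {γ | IsSimplePath E S i γ}))

theorem finite_setOf_isSimplePath (S : Finset α) (i : α) :
    {γ | IsSimplePath E S i γ}.Finite :=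
  (List.finite_length_le α (Fintype.card α)).subset fun _ hγ => hγ.nodup.length_le_card

theorem bddBelow_truncDist (S : Finset α) (i : α) :
    BddBelow (insert 1 (pathWeight p '' {γ | IsSimplePath E S i γ})) :=
  (((finite_setOf_isSimplePath E S i).image _).insert 1).bddBelow

variable {E p} {S T : Finset α} {i : α}

theorem truncDist_le_one : truncDist E p S i ≤ 1 :=
  csInf_le (bddBelow_truncDist E p S i) (Set.mem_insert 1 _)

theorem truncDist_le_pathWeight {γ : List α} (hγ : IsSimplePath E S i γ) :
    truncDist E p S i ≤ pathWeight p γ :=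
  csInf_le (bddBelow_truncDist E p S i) (Set.mem_insert_of_mem 1 ⟨γ, hγ, rfl⟩)

theorem truncDist_eq_one_or_exists (E : Finset (α × α)) (p : α × α → ℝ) (S : Finset α) (i : α) :
    truncDist E p S i = 1 ∨ ∃ γ, IsSimplePath E S i γ ∧ pathWeight p γ = truncDist E p S i := by
  rcases (Set.insert_nonempty _ _).csInf_mem
    (((finite_setOf_isSimplePath E S i).image (pathWeight p)).insert 1) with h | ⟨γ, hγ, h⟩
  · exact Or.inl h
  · exact Or.inr ⟨γ, hγ, h⟩

theorem truncDist_nonneg (hp : ∀ e ∈ E, p e ≤ 1) : 0 ≤ truncDist E p S i := by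
  rcases truncDist_eq_one_or_exists E p S i with h | ⟨γ, hγ, h⟩
  · rw [h]; exact zero_le_one
  · rw [← h]; exact pathWeight_nonneg hp hγ.isChain

theorem truncDist_eq_zero_of_mem (hp : ∀ e ∈ E, p e ≤ 1) {s : α} (hs : s ∈ S) :
    truncDist E p S s = 0 :=
  le_antisymm (by simpa [pathWeight, pathEdges] using
      truncDist_le_pathWeight (p := p) (⟨⟨s, hs, rfl⟩, rfl, List.isChain_singleton s,
        List.nodup_singleton s⟩ : IsSimplePath E S s [s]))
    (truncDist_nonneg hp)

theorem truncDist_anti (i : α) : Antitone fun S => truncDist E p S i := fun _ _ hST =>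
  csInf_le_csInf (bddBelow_truncDist E p _ i) (Set.insert_nonempty _ _)
    (Set.insert_subset_insert (Set.image_mono fun _ hγ => hγ.mono hST))

theorem truncDist_le_add (hp : ∀ e ∈ E, p e ≤ 1) {a b : α} (he : (a, b) ∈ E) :
    truncDist E p S b ≤ truncDist E p S a + (1 - p (a, b)) := by
  have hw : 0 ≤ 1 - p (a, b) := sub_nonneg.2 (hp _ he)
  rcases truncDist_eq_one_or_exists E p S a with ha | ⟨γ, hγ, hwγ⟩
  · linarith [truncDist_le_one (E := E) (p := p) (S := S) (i := b)]
  rw [← hwγ]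
  by_cases hb : b ∈ γ
  · obtain ⟨n, hn⟩ := hγ.exists_take hb
    linarith [truncDist_le_pathWeight (p := p) hn, pathWeight_take_le hp hγ.isChain n]
  · rw [← pathWeight_concat hγ.getLast?_eq b]
    exact truncDist_le_pathWeight (hγ.concat he hb)

theorem truncDist_le_or_exists_insert [DecidableEq α] (S T : Finset α) (i : α) :
    truncDist E p S i ≤ truncDist E p T i ∨
      ∃ t ∈ T, truncDist E p (insert t S) i ≤ truncDist E p T i := by
  rcases truncDist_eq_one_or_exists E p T i with h | ⟨γ, hγ, h⟩
  · exact Or.inl (h ▸ truncDist_le_one)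
  · obtain ⟨t, ht, hhead⟩ := hγ.head_mem
    exact Or.inr ⟨t, ht, h ▸ truncDist_le_pathWeight
      ⟨⟨t, Finset.mem_insert_self t S, hhead⟩, hγ.getLast?_eq, hγ.isChain, hγ.nodup⟩⟩

end Distance

section WorstScenario

variable {α : Type*} (E : Finset (α × α)) (p : α × α → ℝ) (S : Finset α)

/- Every edge is driven by one time `u ∈ [0, 1)`. Edge `(a, b)` is dead on an interval of length
`1 - p (a, b)` starting at `truncDist E p S a`, the time from which `a` is influenced; if that
interval would overshoot `1` it is shifted to end at `1`, so the edge stays dead whenever `a` is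
influenced. -/
noncomputable def deadInterval (e : α × α) : Set ℝ :=
  Set.Ico (min (truncDist E p S e.1) (p e)) (min (truncDist E p S e.1) (p e) + (1 - p e))

open Classical in
noncomputable def worstScenario (u : ℝ) : Finset (α × α) :=
  {e ∈ E | u ∉ deadInterval E p S e}

variable {E p S}

theorem mem_worstScenario {u : ℝ} {e : α × α} :
    e ∈ worstScenario E p S u ↔ e ∈ E ∧ u ∉ deadInterval E p S e := by
  simp [worstScenario]

variable [Fintype α] {u : ℝ}

theorem truncDist_le_of_reflTransGen (hp : ∀ e ∈ E, p e ≤ 1) (hu0 : 0 ≤ u) (hu1 : u < 1)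
    {s i : α} (hs : s ∈ S)
    (h : Relation.ReflTransGen (fun a b => (a, b) ∈ worstScenario E p S u) s i) :
    truncDist E p S i ≤ u := by
  induction h with
  | refl => rw [truncDist_eq_zero_of_mem hp hs]; exact hu0
  | @tail b c _ hbc ih =>
    obtain ⟨hE, hlive⟩ := mem_worstScenario.1 hbc
    have hlate : min (truncDist E p S b) (p (b, c)) + (1 - p (b, c)) ≤ u := by
      by_contra hlt
      exact hlive ⟨(min_le_left _ _).trans ih, not_le.1 hlt⟩
    have : truncDist E p S b + (1 - p (b, c)) ≤ u := by
      rcases min_choice (truncDist E p S b) (p (b, c)) with hmin | hmin <;> rw [hmin] at hlate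
      · exact hlate
      · linarith
    linarith [truncDist_le_add hp hE (S := S)]

theorem reflTransGen_of_pathWeight_le (hp : ∀ e ∈ E, p e ≤ 1) (γ : List α) {a i : α}
    (hhead : γ.head? = some a) (hlast : γ.getLast? = some i)
    (hγ : γ.IsChain fun a b => (a, b) ∈ E) (hw : truncDist E p S a + pathWeight p γ ≤ u) :
    Relation.ReflTransGen (fun a b => (a, b) ∈ worstScenario E p S u) a i := by
  induction γ using List.twoStepInduction generalizing a with
  | nil => simp at hhead
  | singleton x =>
    simp only [List.head?_cons, List.getLast?_singleton, Option.some.injEq] at hhead hlast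
    exact hhead ▸ hlast ▸ Relation.ReflTransGen.refl
  | cons_cons x y t _ ih =>
    simp only [List.head?_cons, Option.some.injEq] at hhead
    subst hhead
    rw [List.getLast?_cons_cons] at hlast
    obtain ⟨hxy, hγ⟩ := List.isChain_cons_cons.1 hγ
    rw [pathWeight_cons_cons] at hw
    have hrest := pathWeight_nonneg hp hγ
    have hlive : (x, y) ∈ worstScenario E p S u := by
      refine mem_worstScenario.2 ⟨hxy, fun hdead => ?_⟩
      linarith [hdead.2, min_le_left (truncDist E p S x) (p (x, y))]
    exact .head hlive (ih y rfl hlast hγ (by linarith [truncDist_le_add hp hxy (S := S)]))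

theorem influenced_worstScenario_iff (hp : ∀ e ∈ E, p e ≤ 1) (hu0 : 0 ≤ u) (hu1 : u < 1)
    (i : α) : influenced (worstScenario E p S u) S i ↔ truncDist E p S i ≤ u := by
  refine ⟨fun ⟨s, hs, h⟩ => truncDist_le_of_reflTransGen hp hu0 hu1 hs h, fun hi => ?_⟩
  rcases truncDist_eq_one_or_exists E p S i with h | ⟨γ, hγ, hwγ⟩
  · exact absurd (h ▸ hi) (not_le.2 hu1)
  obtain ⟨s, hs, hhead⟩ := hγ.head_mem
  refine ⟨s, hs, reflTransGen_of_pathWeight_le hp γ hhead hγ.getLast?_eq hγ.isChain ?_⟩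
  rwa [truncDist_eq_zero_of_mem hp hs, zero_add, hwγ]

end WorstScenario

section Probability

variable {α : Type*} [Fintype α] {θ : Finset (α × α) → ℝ}

theorem prob_eq_sum_ite (θ : Finset (α × α) → ℝ) (A : Finset (α × α) → Prop) [DecidablePred A] :
    prob θ A = ∑ c, if A c then θ c else 0 := by
  unfold prob
  congr!

theorem prob_nonneg (hθ : ∀ c, 0 ≤ θ c) (A : Finset (α × α) → Prop) : 0 ≤ prob θ A := by
  classical
  exact Finset.sum_nonneg fun c _ => ite_nonneg (hθ c) le_rfl

theorem expInf_eq_sum_prob (θ : Finset (α × α) → ℝ) (S : Finset α) :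
    expInf θ S = ∑ i, prob θ (fun c => influenced c S i) := by
  classical
  simp only [expInf, R, Set.ncard_eq_toFinset_card', Set.toFinset_ofPred, Finset.card_filter,
    Nat.cast_sum, Finset.mul_sum, prob_eq_sum_ite]
  rw [Finset.sum_comm]
  simp

end Probability

section LowerBound

variable {E : Finset (V × V)} {p : V × V → ℝ} {θ : Finset (V × V) → ℝ}

theorem prob_not_mem (hθ : memTheta E p θ) {e : V × V} (he : e ∈ E) :
    prob θ (fun c => e ∉ c) = 1 - p e := by
  rw [prob_eq_sum_ite, ← hθ.2.2.1, ← hθ.2.2.2 e he, ← Finset.sum_sub_distrib]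
  exact Finset.sum_congr rfl fun c _ => by split_ifs <;> ring

theorem sum_list_map_sum_comm {ι κ : Type*} (s : Finset ι) (l : List κ) (f : κ → ι → ℝ) :
    ∑ c ∈ s, (l.map fun e => f e c).sum = (l.map fun e => ∑ c ∈ s, f e c).sum := by
  induction l with
  | nil => simp
  | cons e t ih => simp [Finset.sum_add_distrib, ih]

-- The union bound along `γ`: `i` is influenced unless one of the edges of `γ` is dead.
theorem one_sub_pathWeight_le_prob (hθ : memTheta E p θ) {S : Finset V} {s i : V} (hs : s ∈ S)
    {γ : List V} (hhead : γ.head? = some s) (hlast : γ.getLast? = some i)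
    (hγ : γ.IsChain fun a b => (a, b) ∈ E) :
    1 - pathWeight p γ ≤ prob θ (fun c => influenced c S i) := by
  classical
  set dead : Finset (V × V) → ℝ := fun c =>
    ((pathEdges γ).map fun e => if e ∉ c then θ c else 0).sum
  have hcover : ∀ c, θ c ≤ (if influenced c S i then θ c else 0) + dead c := by
    intro c
    have hterm : ∀ x ∈ (pathEdges γ).map fun e => if e ∉ c then θ c else 0, 0 ≤ x := by
      simp only [List.mem_map]
      rintro x ⟨e, -, rfl⟩
      exact ite_nonneg (hθ.1 c) le_rfl
    by_cases hinf : influenced c S i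
    · rw [if_pos hinf]
      linarith [List.sum_nonneg hterm]
    · obtain ⟨e, he, hec⟩ : ∃ e ∈ pathEdges γ, e ∉ c := by
        by_contra! hall
        exact hinf ⟨s, hs, reflTransGen_of_isChain (isChain_iff_forall_mem_pathEdges.2 hall)
          hhead hlast⟩
      rw [if_neg hinf, zero_add]
      simpa [dead, hec] using List.single_le_sum hterm _ (List.mem_map.2 ⟨e, he, rfl⟩)
  have hdead : ∑ c, dead c = pathWeight p γ := by
    simp only [dead, sum_list_map_sum_comm, pathWeight, ← prob_eq_sum_ite]
    exact congrArg List.sum (List.map_congr_left fun e he =>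
      prob_not_mem hθ (isChain_iff_forall_mem_pathEdges.1 hγ e he))
  have := Finset.sum_le_sum fun c (_ : c ∈ Finset.univ) => hcover c
  rw [Finset.sum_add_distrib, hθ.2.2.1, hdead, ← prob_eq_sum_ite] at this
  linarith

theorem one_sub_truncDist_le_prob (hθ : memTheta E p θ) (S : Finset V) (i : V) :
    1 - truncDist E p S i ≤ prob θ (fun c => influenced c S i) := by
  rcases truncDist_eq_one_or_exists E p S i with h | ⟨γ, hγ, h⟩
  · rw [h, sub_self]
    exact prob_nonneg hθ.1 _
  · obtain ⟨s, hs, hhead⟩ := hγ.head_mem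
    exact h ▸ one_sub_pathWeight_le_prob hθ hs hhead hγ.getLast?_eq hγ.isChain

theorem sum_one_sub_truncDist_le_expInf (hθ : memTheta E p θ) (S : Finset V) :
    ∑ i, (1 - truncDist E p S i) ≤ expInf θ S := by
  rw [expInf_eq_sum_prob]
  exact Finset.sum_le_sum fun i _ => one_sub_truncDist_le_prob hθ S i

end LowerBound

section WorstTheta

open MeasureTheory

variable {α : Type*} [Fintype α] (E : Finset (α × α)) (p : α × α → ℝ) (S : Finset α)

noncomputable def worstTheta (c : Finset (α × α)) : ℝ :=
  (volume.restrict (Set.Ico (0 : ℝ) 1)).real {u | worstScenario E p S u = c}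

theorem measurableSet_worstScenario_eq (c : Finset (α × α)) :
    MeasurableSet {u | worstScenario E p S u = c} := by
  have hmem : ∀ e, Measurable fun u => e ∈ worstScenario E p S u := fun e => by
    simp only [mem_worstScenario]
    exact measurable_const.and (measurableSet_setOfPred.1 measurableSet_Ico.compl)
  simp_rw [Finset.ext_iff]
  exact measurableSet_setOfPred.2 (Measurable.forall fun e => (hmem e).iff measurable_const)

theorem prob_worstTheta (A : Finset (α × α) → Prop) :
    prob (worstTheta E p S) A =
      (volume.restrict (Set.Ico (0 : ℝ) 1)).real {u | A (worstScenario E p S u)} := by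
  classical
  have hunion : {u | A (worstScenario E p S u)} =
      ⋃ c ∈ Finset.univ.filter A, {u | worstScenario E p S u = c} := by
    ext u
    simp
  rw [hunion, measureReal_biUnion_finset, Finset.sum_filter, prob_eq_sum_ite]
  · rfl
  · exact fun c₁ _ c₂ _ hne => Set.disjoint_left.2 fun u h₁ h₂ => hne (h₁.symm.trans h₂)
  · exact fun c _ => measurableSet_worstScenario_eq E p S c

variable {E p}

theorem prob_worstTheta_mem (hp : ∀ e ∈ E, 0 ≤ p e ∧ p e ≤ 1) {e : α × α} (he : e ∈ E) :
    prob (worstTheta E p S) (e ∈ ·) = p e := by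
  have hsub : deadInterval E p S e ⊆ Set.Ico 0 1 :=
    Set.Ico_subset_Ico (le_min (truncDist_nonneg fun e he => (hp e he).2) (hp e he).1)
      (by linarith [min_le_right (truncDist E p S e.1) (p e)])
  have hlive : {u | e ∈ worstScenario E p S u} ∩ Set.Ico 0 1 =
      Set.Ico 0 1 \ deadInterval E p S e := by
    ext u
    simp [mem_worstScenario, he, and_comm]
  rw [prob_worstTheta, measureReal_restrict_apply' measurableSet_Ico, hlive,
    measureReal_sdiff hsub measurableSet_Ico measure_Ico_lt_top.ne, Real.volume_real_Ico,
    deadInterval, Real.volume_real_Ico, add_sub_cancel_left, max_eq_left (sub_nonneg.2 (hp e he).2)]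
  norm_num

theorem expInf_worstTheta (hp : ∀ e ∈ E, p e ≤ 1) :
    expInf (worstTheta E p S) S = ∑ i, (1 - truncDist E p S i) := by
  rw [expInf_eq_sum_prob]
  refine Finset.sum_congr rfl fun i _ => ?_
  have hinf : {u | influenced (worstScenario E p S u) S i} ∩ Set.Ico 0 1 =
      Set.Ico (truncDist E p S i) 1 := by
    ext u
    simp only [Set.mem_inter_iff, Set.mem_ofPred_eq, Set.mem_Ico]
    constructor
    · rintro ⟨h, hu0, hu1⟩
      exact ⟨(influenced_worstScenario_iff hp hu0 hu1 i).1 h, hu1⟩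
    · rintro ⟨h, hu1⟩
      have hu0 := (truncDist_nonneg hp).trans h
      exact ⟨(influenced_worstScenario_iff hp hu0 hu1 i).2 h, hu0, hu1⟩
  rw [prob_worstTheta, measureReal_restrict_apply' measurableSet_Ico, hinf, Real.volume_real_Ico,
    max_eq_left (sub_nonneg.2 truncDist_le_one)]

end WorstTheta

section ClosedForm

variable {E : Finset (V × V)} {p : V × V → ℝ}

theorem worstTheta_mem (hp : ∀ e ∈ E, 0 ≤ p e ∧ p e ≤ 1) (S : Finset V) :
    memTheta E p (worstTheta E p S) := by
  refine ⟨fun c => MeasureTheory.measureReal_nonneg, fun c hc => ?_, ?_, fun e he => ?_⟩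
  · obtain ⟨u, rfl⟩ : ∃ u, worstScenario E p S u = c := by
      by_contra! h
      simp [worstTheta, h] at hc
    exact fun e he => (mem_worstScenario.1 he).1
  · have h := prob_worstTheta E p S fun _ => True
    simp only [prob, if_true, Set.ofPred_true] at h
    rw [h, MeasureTheory.measureReal_restrict_apply' measurableSet_Ico, Set.univ_inter,
      Real.volume_real_Ico]
    norm_num
  · rw [← prob_worstTheta_mem S hp he, prob_eq_sum_ite]

theorem fcorr_eq_sum_one_sub_truncDist (hp : ∀ e ∈ E, 0 ≤ p e ∧ p e ≤ 1) (S : Finset V) :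
    fcorr E p S = ∑ i, (1 - truncDist E p S i) :=
  IsLeast.csInf_eq ⟨⟨worstTheta E p S, worstTheta_mem hp S,
    (expInf_worstTheta S fun e he => (hp e he).2).symm⟩,
    by rintro _ ⟨θ, hθ, rfl⟩; exact sum_one_sub_truncDist_le_expInf hθ S⟩

theorem monotone_fcorr (hp : ∀ e ∈ E, 0 ≤ p e ∧ p e ≤ 1) : Monotone (fcorr E p) :=
  fun S T hST => by
    simp only [fcorr_eq_sum_one_sub_truncDist hp]
    exact Finset.sum_le_sum fun i _ => sub_le_sub_left (truncDist_anti i hST) 1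

theorem fcorr_empty_nonneg (hp : ∀ e ∈ E, 0 ≤ p e ∧ p e ≤ 1) : 0 ≤ fcorr E p ∅ := by
  rw [fcorr_eq_sum_one_sub_truncDist hp]
  exact Finset.sum_nonneg fun i _ => sub_nonneg.2 truncDist_le_one

theorem boundedByGains_fcorr (hp : ∀ e ∈ E, 0 ≤ p e ∧ p e ≤ 1) : BoundedByGains (fcorr E p) := by
  rw [show fcorr E p = fun S => ∑ i, (1 - truncDist E p S i) from
    funext (fcorr_eq_sum_one_sub_truncDist hp)]
  refine BoundedByGains.sum _ fun i _ => boundedByGains_of_exists_insert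
    (fun S T hST => sub_le_sub_left (truncDist_anti i hST) 1) fun S T => ?_
  rcases truncDist_le_or_exists_insert S T i with h | ⟨t, ht, h⟩
  · exact Or.inl (sub_le_sub_left h 1)
  · exact Or.inr ⟨t, ht, sub_le_sub_left h 1⟩

end ClosedForm

theorem greedy_guarantee_general (E : Finset (V × V)) (p : V × V → ℝ)
    (hp : ∀ e ∈ E, 0 ≤ p e ∧ p e ≤ 1)
    (k : ℕ) (hk1 : 1 ≤ k)
    (Sg : ℕ → Finset V)
    (hstep : ∀ i < k, ∃ v ∉ Sg i, Sg (i + 1) = insert v (Sg i) ∧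
      ∀ w ∉ Sg i, fcorr E p (insert w (Sg i)) ≤ fcorr E p (insert v (Sg i))) :
    ∀ S : Finset V, S.card ≤ k →
      (1 - 1 / Real.exp 1) * fcorr E p S ≤ fcorr E p (Sg k) := fun _ hS =>
  greedy_approx (monotone_fcorr hp) (fcorr_empty_nonneg hp) (boundedByGains_fcorr hp) hk1
    (fun i hi => (hstep i hi).imp fun _ h => h.2) hS

/-- the greedy algorithm for maximizing `f^corr` achieves a
`(1 - 1/e)` approximation guarantee. -/
theorem greedy_guarantee (E : Finset (V × V)) (p : V × V → ℝ)
    (hp : ∀ e ∈ E, 0 ≤ p e ∧ p e ≤ 1)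
    (k : ℕ) (hk1 : 1 ≤ k) (hk : k ≤ Fintype.card V)
    (Sg : ℕ → Finset V) (h0 : Sg 0 = ∅)
    (hstep : ∀ i < k, ∃ v ∉ Sg i, Sg (i + 1) = insert v (Sg i) ∧
      ∀ w ∉ Sg i, fcorr E p (insert w (Sg i)) ≤ fcorr E p (insert v (Sg i))) :
    ∀ S : Finset V, S.card ≤ k →
      (1 - 1 / Real.exp 1) * fcorr E p S ≤ fcorr E p (Sg k) :=
  greedy_guarantee_general E p hp k hk1 Sg hstep

end CorrIM
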